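/- arXiv:2105.08495 — 2 statements merged into one kernel-verified Lean document; each statement's English description precedes it below -/
import Mathlib

section
/- Let P, σ², β₀, L, H₁, H₂, D, α be positive reals and ρ ∈ (0, 1/2). Define C_low(M) = (1/2)·log₂(1 + (P/σ²)·(max(ρ(1−2ρ)M²·β₀^{3/2}/(H₁H₂D)^{α/2} − β₀^{1/2}/L^{α/2}, 0))²). Then lim_{M→∞} C_low(M)/log₂(M) = 2. -/
open Filter Real

lemma aux_tendsto_log_ratio (a : ℝ) :
    Filter.Tendsto (fun M : ℕ => (a + 4 * Real.log M) / Real.log M)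
      Filter.atTop (nhds 4) := by
  have h0 : Tendsto (fun M : ℕ => Real.log M) atTop atTop :=
    Real.tendsto_log_atTop.comp tendsto_natCast_atTop_atTop
  have h1 : Tendsto (fun M : ℕ => a * (Real.log M)⁻¹ + 4) atTop (nhds 4) := by
    have := (tendsto_inv_atTop_zero.comp h0).const_mul a
    simpa using this.add_const 4
  refine h1.congr' ?_
  filter_upwards [h0.eventually_gt_atTop 0] with M hM
  field_simp

set_option maxHeartbeats 1000000 in
theorem stmt_1 (P σ2 β0 L H1 H2 D α ρ : ℝ) (hP : 0 < P) (hσ : 0 < σ2) (hβ : 0 < β0)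
    (hL : 0 < L) (hH1 : 0 < H1) (hH2 : 0 < H2) (hD : 0 < D) (hα : 0 < α)
    (hρ : ρ ∈ Set.Ioo (0:ℝ) (1/2)) :
    Filter.Tendsto (fun M : ℕ =>
      (((1:ℝ)/2) * Real.logb 2 (1 + (P/σ2) *
        (max (ρ * (1 - 2*ρ) * (M:ℝ)^2 * β0 ^ ((3:ℝ)/2) / (H1*H2*D) ^ (α/2)
              - β0 ^ ((1:ℝ)/2) / L ^ (α/2)) 0)^2)) / Real.logb 2 M)
      Filter.atTop (nhds 2) := by
  obtain ⟨hρ0, hρ2⟩ := hρ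
  set k := P / σ2 with hk
  have hkpos : 0 < k := div_pos hP hσ
  set c := ρ * (1 - 2*ρ) * β0 ^ ((3:ℝ)/2) / (H1*H2*D) ^ (α/2) with hc
  have hcpos : 0 < c := by
    apply div_pos
    · exact mul_pos (mul_pos hρ0 (by linarith)) (Real.rpow_pos_of_pos hβ _)
    · exact Real.rpow_pos_of_pos (by positivity) _
  set d := β0 ^ ((1:ℝ)/2) / L ^ (α/2) with hd
  have hdpos : 0 < d := div_pos (Real.rpow_pos_of_pos hβ _) (Real.rpow_pos_of_pos hL _)
  have hrw : ∀ M : ℕ, ρ * (1 - 2*ρ) * (M:ℝ)^2 * β0 ^ ((3:ℝ)/2) / (H1*H2*D) ^ (α/2)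
      = c * (M:ℝ)^2 := fun M => by rw [hc]; ring
  -- eventual facts
  have hev2 : ∀ᶠ M : ℕ in atTop, (2:ℝ) ≤ (M:ℝ) := by
    filter_upwards [eventually_ge_atTop 2] with M hM
    exact_mod_cast hM
  have hevd : ∀ᶠ M : ℕ in atTop, 2 * d / c ≤ (M:ℝ)^2 := by
    filter_upwards [eventually_ge_atTop (⌈Real.sqrt (2*d/c)⌉₊)] with M hM
    have h1 : Real.sqrt (2*d/c) ≤ (M:ℝ) :=
      le_trans (Nat.le_ceil _) (by exact_mod_cast hM)
    calc 2*d/c = Real.sqrt (2*d/c) ^ 2 := (Real.sq_sqrt (by positivity)).symm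
      _ ≤ (M:ℝ)^2 := pow_le_pow_left₀ (Real.sqrt_nonneg _) h1 2
  -- main ratio function
  set f : ℕ → ℝ := fun M =>
    Real.log (1 + k * (max (c * (M:ℝ)^2 - d) 0)^2) / Real.log M with hf
  have hftend : Tendsto f atTop (nhds 4) := by
    apply tendsto_of_tendsto_of_tendsto_of_le_of_le'
      (aux_tendsto_log_ratio (Real.log (k * c^2 / 4)))
      (aux_tendsto_log_ratio (Real.log (1 + k * c^2)))
    · -- lower bound
      filter_upwards [hev2, hevd] with M hM2 hMd
      have hlogM : 0 < Real.log M := Real.log_pos (by linarith)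
      have hcM : d ≤ c * (M:ℝ)^2 / 2 := by
        rw [div_le_iff₀ hcpos] at hMd
        linarith
      have hmax : max (c * (M:ℝ)^2 - d) 0 = c * (M:ℝ)^2 - d := by
        apply max_eq_left
        nlinarith [sq_nonneg (M:ℝ), mul_pos hcpos (by nlinarith : (0:ℝ) < (M:ℝ)^2)]
      have hge : k * c^2 / 4 * (M:ℝ)^4 ≤ 1 + k * (max (c * (M:ℝ)^2 - d) 0)^2 := by
        rw [hmax]
        have h1 : c * (M:ℝ)^2 / 2 ≤ c * (M:ℝ)^2 - d := by linarith
        have h2 : (c * (M:ℝ)^2 / 2)^2 ≤ (c * (M:ℝ)^2 - d)^2 := by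
          apply pow_le_pow_left₀ (by positivity) h1
        nlinarith [hkpos.le]
      have hposM : (0:ℝ) < k * c^2 / 4 * (M:ℝ)^4 := by positivity
      have := Real.log_le_log hposM hge
      rw [Real.log_mul (by positivity) (by positivity), Real.log_pow] at this
      rw [hf]
      simp only
      gcongr
      push_cast at this
      linarith
    · -- upper bound
      filter_upwards [hev2] with M hM2
      have hlogM : 0 < Real.log M := Real.log_pos (by linarith)
      have hM4 : (1:ℝ) ≤ (M:ℝ)^4 := by
        have := pow_le_pow_left₀ (by norm_num : (0:ℝ) ≤ 2) hM2 4
        norm_num at this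
        linarith
      have hmaxle : max (c * (M:ℝ)^2 - d) 0 ≤ c * (M:ℝ)^2 := by
        apply max_le (by linarith) (by positivity)
      have hsq : (max (c * (M:ℝ)^2 - d) 0)^2 ≤ c^2 * (M:ℝ)^4 := by
        calc (max (c * (M:ℝ)^2 - d) 0)^2 ≤ (c * (M:ℝ)^2)^2 :=
              pow_le_pow_left₀ (le_max_right _ 0) hmaxle 2
          _ = c^2 * (M:ℝ)^4 := by ring
      have hle : 1 + k * (max (c * (M:ℝ)^2 - d) 0)^2 ≤ (1 + k * c^2) * (M:ℝ)^4 := by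
        calc 1 + k * (max (c * (M:ℝ)^2 - d) 0)^2
            ≤ (M:ℝ)^4 + k * (c^2 * (M:ℝ)^4) :=
              add_le_add hM4 (mul_le_mul_of_nonneg_left hsq hkpos.le)
          _ = (1 + k * c^2) * (M:ℝ)^4 := by ring
      have hpos : (0:ℝ) < 1 + k * (max (c * (M:ℝ)^2 - d) 0)^2 := by positivity
      have := Real.log_le_log hpos hle
      rw [Real.log_mul (by positivity) (by positivity), Real.log_pow] at this
      rw [hf]
      simp only
      gcongr
      push_cast at this
      linarith
  have hfinal : Tendsto (fun M : ℕ => (1/2 : ℝ) * f M) atTop (nhds 2) := by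
    convert hftend.const_mul (1/2 : ℝ) using 2
    norm_num
  refine hfinal.congr' ?_
  filter_upwards [hev2] with M hM2
  have hlogM : 0 < Real.log M := Real.log_pos (by linarith)
  have hlog2 : Real.log 2 ≠ 0 := by positivity
  rw [hf]
  simp only [hrw M, Real.logb]
  rw [hk]
  field_simp
end

section
/- For K > 0 and constants A ≥ 0, E > 0, define L(M) = (1/2)log₂(1 + K(E·M² − A)²) for M large enough that E·M² > A, and U(M) = (1/2)log₂(1 + K(E·M² + A + B·M)²) for B ≥ 0. Then U(M) − L(M) → 0 as M → ∞. -/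
/-! Both arguments of the logarithms are degree-four polynomials in `M` with the same leading
term `K E² M⁴`, so their ratio tends to `1` and the difference of logarithms tends to `0`. -/

open Filter Real Asymptotics Topology

namespace Asymptotics

variable {α : Type*} {l : Filter α} {f g : α → ℝ}

theorem IsEquivalent.tendsto_log_sub_log (hfg : f ~[l] g) (hg : ∀ᶠ x in l, g x ≠ 0) :
    Tendsto (fun x ↦ Real.log (f x) - Real.log (g x)) l (𝓝 0) := by
  have hratio : Tendsto (f / g) l (𝓝 1) := (isEquivalent_iff_tendsto_one hg).1 hfg
  have hf : ∀ᶠ x in l, f x ≠ 0 := by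
    filter_upwards [hratio.eventually_ne one_ne_zero] with x hx
    exact (div_ne_zero_iff.1 hx).1
  have hlog := (continuousAt_log one_ne_zero).tendsto.comp hratio
  rw [log_one] at hlog
  refine hlog.congr' ?_
  filter_upwards [hf, hg] with x hfx hgx
  exact log_div hfx hgx

theorem IsEquivalent.tendsto_logb_sub_logb (hfg : f ~[l] g) (hg : ∀ᶠ x in l, g x ≠ 0)
    (b : ℝ) :
    Tendsto (fun x ↦ logb b (f x) - logb b (g x)) l (𝓝 0) := by
  simpa only [logb, ← sub_div, zero_div] using (hfg.tendsto_log_sub_log hg).div_const (Real.log b)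

theorem IsEquivalent.const_add_mul_sq (hfg : f ~[l] g) (hg : Tendsto (fun x ↦ |g x|) l atTop)
    (c : ℝ) {K : ℝ} (hK : K ≠ 0) :
    (fun x ↦ c + K * f x ^ 2) ~[l] fun x ↦ K * g x ^ 2 := by
  refine (IsEquivalent.refl.mul (hfg.pow 2)).const_add_of_norm_tendsto_atTop ?_
  have : Tendsto (fun x ↦ |K| * |g x| ^ 2) l atTop :=
    ((tendsto_pow_atTop two_ne_zero).comp hg).const_mul_atTop (abs_pos.2 hK)
  simpa only [Function.comp_def, Pi.mul_apply, Pi.pow_apply, norm_mul, norm_pow,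
    Real.norm_eq_abs] using this

end Asymptotics

theorem isEquivalent_quadratic_atTop {a : ℝ} (ha : a ≠ 0) (b c : ℝ) :
    (fun x : ℝ ↦ a * x ^ 2 + b * x + c) ~[atTop] fun x ↦ a * x ^ 2 := by
  open Polynomial in
  have h := isEquivalent_atTop_lead (C a * X ^ 2 + C b * X + C c)
  rw [natDegree_quadratic ha, leadingCoeff_quadratic ha] at h
  simpa using h

theorem stmt_18_general (K A E B : ℝ) (hK : 0 < K) (hE : 0 < E) :
    Filter.Tendsto (fun M : ℕ =>
      ((1:ℝ)/2) * Real.logb 2 (1 + K * (E * (M:ℝ)^2 + A + B * (M:ℝ))^2)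
        - ((1:ℝ)/2) * Real.logb 2 (1 + K * (E * (M:ℝ)^2 - A)^2))
      Filter.atTop (nhds 0) := by
  have hlead : Tendsto (fun x : ℝ ↦ |E * x ^ 2|) atTop atTop :=
    tendsto_abs_atTop_atTop.comp ((tendsto_pow_atTop two_ne_zero).const_mul_atTop hE)
  have hU : (fun x : ℝ ↦ 1 + K * (E * x ^ 2 + A + B * x) ^ 2) ~[atTop]
      fun x ↦ K * (E * x ^ 2) ^ 2 := by
    have hquad := isEquivalent_quadratic_atTop hE.ne' B A
    exact (hquad.congr_left (.of_eq (by ext; ring))).const_add_mul_sq hlead 1 hK.ne'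
  have hL : (fun x : ℝ ↦ 1 + K * (E * x ^ 2 - A) ^ 2) ~[atTop]
      fun x ↦ K * (E * x ^ 2) ^ 2 := by
    have hquad := isEquivalent_quadratic_atTop hE.ne' 0 (-A)
    exact (hquad.congr_left (.of_eq (by ext; ring))).const_add_mul_sq hlead 1 hK.ne'
  have hL0 : ∀ᶠ x : ℝ in atTop, 1 + K * (E * x ^ 2 - A) ^ 2 ≠ 0 :=
    .of_forall fun x ↦ by positivity
  have hdiff := ((hU.trans hL.symm).tendsto_logb_sub_logb hL0 2).const_mul (1 / 2)
  rw [mul_zero] at hdiff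
  exact (hdiff.comp tendsto_natCast_atTop_atTop).congr fun M ↦ mul_sub _ _ _

theorem stmt_18 (K A E B : ℝ) (hK : 0 < K) (hA : 0 ≤ A) (hE : 0 < E) (hB : 0 ≤ B) :
    Filter.Tendsto (fun M : ℕ =>
      ((1:ℝ)/2) * Real.logb 2 (1 + K * (E * (M:ℝ)^2 + A + B * (M:ℝ))^2)
        - ((1:ℝ)/2) * Real.logb 2 (1 + K * (E * (M:ℝ)^2 - A)^2))
      Filter.atTop (nhds 0) :=
  stmt_18_general K A E B hK hE
end
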